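/- For binary sequences σ ∈ {0,1}^n and a permutation π of {1,…,n}, define ξ_i(σ) = Σ_{j<i} σ_j, and for the reordered sequence σ' with σ'_k = σ_{π(k)} define ξ'_i(σ) = Σ_{j : π⁻¹(j) < π⁻¹(i)} σ_j, and π_σ = Σ_{j<k, π⁻¹(j)>π⁻¹(k)} σ_j σ_k. Then for any index i with σ_i = 0, setting σ+e_i to be σ with the i-th entry changed to 1, we have ξ_i(σ) + π_{σ+e_i} ≡ ξ'_i(σ) + π_σ (mod 2). -/

import Mathlib

/-!
Since `σ i = 0`, passing from `σ` to `σ + e_i` adds to `π_σ` one term `σ_k` for every position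
`k` that `π` moves to the other side of `i`. Modulo 2 the sum of these `σ_k` is also
`ξ_i(σ) + ξ'_i(σ)`: that sum runs over the symmetric difference of `{k | k < i}` and
`{k | π⁻¹ k < π⁻¹ i}`, the common part being counted twice.
-/

open Finset

/-- ξ_i(σ) = Σ_{j<i} σ_j (computed in ℤ/2, so equalities are congruences mod 2). -/
def xi {n : ℕ} (i : Fin n) (σ : Fin n → ZMod 2) : ZMod 2 :=
  ∑ j ∈ univ.filter (fun j => j < i), σ j

/-- ξ'_i(σ) = Σ_{j : π⁻¹(j) < π⁻¹(i)} σ_j. -/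
def xi' {n : ℕ} (π : Equiv.Perm (Fin n)) (i : Fin n) (σ : Fin n → ZMod 2) : ZMod 2 :=
  ∑ j ∈ univ.filter (fun j => π.symm j < π.symm i), σ j

/-- π_σ = Σ_{j<k, π⁻¹(j)>π⁻¹(k)} σ_j σ_k. -/
def piSigma {n : ℕ} (π : Equiv.Perm (Fin n)) (σ : Fin n → ZMod 2) : ZMod 2 :=
  ∑ p ∈ univ.filter (fun p : Fin n × Fin n =>
      p.1 < p.2 ∧ π.symm p.2 < π.symm p.1), σ p.1 * σ p.2

open scoped symmDiff

theorem Finset.sum_add_sum_eq_sum_symmDiff_add_two_nsmul {ι M : Type*} [DecidableEq ι]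
    [AddCommMonoid M] (s t : Finset ι) (f : ι → M) :
    ∑ x ∈ s, f x + ∑ x ∈ t, f x = ∑ x ∈ s ∆ t, f x + 2 • ∑ x ∈ s ∩ t, f x := by
  have hunion : s ∪ t = s ∆ t ∪ s ∩ t := (symmDiff_sup_inf s t).symm
  rw [← sum_union_inter, hunion, sum_union (s₁ := s ∆ t) (s₂ := s ∩ t) (disjoint_symmDiff_inf s t),
    two_nsmul, add_assoc]

theorem Function.update_eq_add_single {ι R : Type*} [DecidableEq ι] [AddZeroClass R]
    {f : ι → R} {i : ι} (hi : f i = 0) (a : R) : Function.update f i a = f + Pi.single i a := by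
  ext j
  rcases eq_or_ne j i with rfl | hj
  · simp [hi]
  · simp [hj]

theorem Function.Injective.xor_lt_iff {α β : Type*} [LinearOrder α] [LinearOrder β]
    {f : α → β} (hf : Function.Injective f) (i k : α) :
    Xor (k < i) (f k < f i) ↔ i < k ∧ f k < f i ∨ k < i ∧ f i < f k := by
  rcases lt_trichotomy k i with h | rfl | h
  · simp [h, h.not_gt, (hf.ne h.ne').le_iff_lt]
  · simp
  · simp [h, h.not_gt]

theorem Fintype.sum_filter_single_mul {ι R : Type*} [Fintype ι] [DecidableEq ι]
    [NonAssocSemiring R] (r : ι → ι → Prop) [DecidableRel r] (i : ι) (f : ι → R) :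
    ∑ p ∈ univ.filter (fun p : ι × ι => r p.1 p.2), (Pi.single i 1 : ι → R) p.1 * f p.2
      = ∑ k ∈ univ.filter (r i), f k := by
  rw [sum_filter, Fintype.sum_prod_type, Fintype.sum_eq_single i, sum_filter]
  · simp
  · intro j hj
    simp [hj]

theorem Fintype.sum_filter_mul_single {ι R : Type*} [Fintype ι] [DecidableEq ι]
    [NonAssocSemiring R] (r : ι → ι → Prop) [DecidableRel r] (i : ι) (f : ι → R) :
    ∑ p ∈ univ.filter (fun p : ι × ι => r p.1 p.2), f p.1 * (Pi.single i 1 : ι → R) p.2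
      = ∑ k ∈ univ.filter (fun k => r k i), f k := by
  rw [sum_filter, Fintype.sum_prod_type_right, Fintype.sum_eq_single i, sum_filter]
  · simp
  · intro j hj
    simp [hj]

theorem Pi.single_mul_single_of_ne {ι R : Type*} [DecidableEq ι] [MulZeroClass R]
    (i : ι) (a b : R) {j k : ι} (hjk : j ≠ k) :
    (Pi.single i a : ι → R) j * (Pi.single i b : ι → R) k = 0 := by
  rcases eq_or_ne j i with rfl | hj
  · simp [Pi.single_eq_of_ne' hjk]
  · simp [Pi.single_eq_of_ne hj]

def crossingPositions {n : ℕ} (π : Equiv.Perm (Fin n)) (i : Fin n) : Finset (Fin n) :=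
  univ.filter (· < i) ∆ univ.filter (fun k => π.symm k < π.symm i)

theorem xi_add_xi' {n : ℕ} (π : Equiv.Perm (Fin n)) (i : Fin n) (σ : Fin n → ZMod 2) :
    xi i σ + xi' π i σ = ∑ k ∈ crossingPositions π i, σ k := by
  rw [xi, xi', sum_add_sum_eq_sum_symmDiff_add_two_nsmul, CharTwo.two_nsmul, add_zero]
  rfl

theorem crossingPositions_eq_union {n : ℕ} (π : Equiv.Perm (Fin n)) (i : Fin n) :
    crossingPositions π i = univ.filter (fun k => i < k ∧ π.symm k < π.symm i)
      ∪ univ.filter (fun k => k < i ∧ π.symm i < π.symm k) := by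
  ext k
  simp only [crossingPositions, mem_symmDiff, mem_union, mem_filter, mem_univ, true_and]
  exact π.symm.injective.xor_lt_iff i k

theorem piSigma_add_single {n : ℕ} (π : Equiv.Perm (Fin n)) (σ : Fin n → ZMod 2) (i : Fin n) :
    piSigma π (σ + Pi.single i 1) = piSigma π σ + ∑ k ∈ crossingPositions π i, σ k := by
  set e : Fin n → ZMod 2 := Pi.single i 1 with he
  have hexpand : ∀ p ∈ univ.filter (fun p : Fin n × Fin n =>
      p.1 < p.2 ∧ π.symm p.2 < π.symm p.1),
      (σ + e) p.1 * (σ + e) p.2 = σ p.1 * σ p.2 + e p.1 * σ p.2 + σ p.1 * e p.2 := by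
    intro p hp
    have hne : p.1 ≠ p.2 := (mem_filter.1 hp).2.1.ne
    rw [Pi.add_apply, Pi.add_apply]
    linear_combination Pi.single_mul_single_of_ne i (1 : ZMod 2) 1 hne
  have hdisj : Disjoint (univ.filter (fun k => i < k ∧ π.symm k < π.symm i))
      (univ.filter (fun k => k < i ∧ π.symm i < π.symm k)) :=
    disjoint_filter.2 fun k _ hik hki => hik.1.asymm hki.1
  rw [piSigma, sum_congr rfl hexpand, sum_add_distrib, sum_add_distrib, he,
    Fintype.sum_filter_single_mul (fun j k => j < k ∧ π.symm k < π.symm j),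
    Fintype.sum_filter_mul_single (fun j k => j < k ∧ π.symm k < π.symm j),
    crossingPositions_eq_union, sum_union hdisj, add_assoc]
  rfl

/-- The sign identity for crossing reordering: if σ_i = 0 then
ξ_i(σ) + π_{σ+e_i} ≡ ξ'_i(σ) + π_σ (mod 2), where σ+e_i changes the i-th entry to 1. -/
theorem reorder_sign_identity {n : ℕ} (π : Equiv.Perm (Fin n))
    (σ : Fin n → ZMod 2) (i : Fin n) (hi : σ i = 0) :
    xi i σ + piSigma π (Function.update σ i 1)
      = xi' π i σ + piSigma π σ := by
  rw [Function.update_eq_add_single hi, piSigma_add_single, ← xi_add_xi']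
  linear_combination CharTwo.add_self_eq_zero (xi i σ)
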